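/- arXiv:1904.10850 — 7 statements merged into one kernel-verified Lean document; each statement's English description precedes it below -/
import Mathlib

section
/- For every natural number r, every finite set S of cells of the integer grid in which any two cells are at Manhattan distance at most 2r satisfies |S| <= 2r^2 + 2r + 1. -/
/-- Manhattan distance between two cells of the integer grid. -/
def mdist (p q : ℤ × ℤ) : ℕ := (p.1 - q.1).natAbs + (p.2 - q.2).natAbs

/-- The disc of radius `r` centered at `c`: all cells at Manhattan distance at most `r`. -/
noncomputable def disc (r : ℕ) (c : ℤ × ℤ) : Finset (ℤ × ℤ) :=
  (Finset.Icc (c.1 - r, c.2 - r) (c.1 + r, c.2 + r)).filter (fun p => mdist p c ≤ r)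

/-- The span of a finite set of cells: the maximum Manhattan distance between two of
its cells (`0` if the set has at most one cell). -/
def span (S : Finset (ℤ × ℤ)) : ℕ := (S ×ˢ S).sup fun pq => mdist pq.1 pq.2

/-!
The linear form `slant r (x, y) = (r + 1) x + r y` separates any two cells at distance at most
`2r`: if it takes equal values at `p` and `q`, then `p - q = s • (-r, r + 1)` for some integer `s`,
a vector of length `(2r + 1) |s|`, so `s = 0`. On the other hand its values on such a set differ
by at most `(r + 1) · 2r`, so they fit in an interval of `2r² + 2r + 1` integers.
-/

theorem Int.card_le_of_forall_sub_le (T : Finset ℤ) (m : ℕ) (h : ∀ a ∈ T, ∀ b ∈ T, a - b ≤ m) :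
    T.card ≤ m + 1 := by
  rcases T.eq_empty_or_nonempty with rfl | hT
  · simp
  calc T.card ≤ (Finset.Icc (T.min' hT) (T.min' hT + m)).card := by
        refine Finset.card_le_card fun a ha => Finset.mem_Icc.2 ⟨T.min'_le a ha, ?_⟩
        linarith [h a ha _ (T.min'_mem hT)]
    _ = m + 1 := by rw [Int.card_Icc]; omega

theorem natCast_mdist (p q : ℤ × ℤ) : (mdist p q : ℤ) = |p.1 - q.1| + |p.2 - q.2| := by
  simp [mdist]

def slant (r : ℕ) (p : ℤ × ℤ) : ℤ := (r + 1) * p.1 + r * p.2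

theorem slant_sub_slant_le {r : ℕ} {p q : ℤ × ℤ} (h : mdist p q ≤ 2 * r) :
    slant r p - slant r q ≤ 2 * r ^ 2 + 2 * r := by
  have hpq : |p.1 - q.1| + |p.2 - q.2| ≤ 2 * r := by rw [← natCast_mdist]; exact_mod_cast h
  calc slant r p - slant r q = (r + 1) * (p.1 - q.1) + r * (p.2 - q.2) := by unfold slant; ring
    _ ≤ (r + 1) * |p.1 - q.1| + r * |p.2 - q.2| := by gcongr <;> exact le_abs_self _
    _ ≤ (r + 1) * (|p.1 - q.1| + |p.2 - q.2|) := by nlinarith [abs_nonneg (p.2 - q.2)]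
    _ ≤ (r + 1) * (2 * r) := by gcongr
    _ = 2 * r ^ 2 + 2 * r := by ring

theorem eq_of_slant_eq {r : ℕ} {p q : ℤ × ℤ} (h : mdist p q ≤ 2 * r)
    (hpq : slant r p = slant r q) : p = q := by
  set s := (p.1 - q.1) + (p.2 - q.2)
  have hx : p.1 - q.1 = -r * s := by unfold slant at hpq; linear_combination hpq
  have hy : p.2 - q.2 = (r + 1) * s := by unfold slant at hpq; linear_combination -hpq
  have hs : s = 0 := by
    have hlen : (2 * r + 1) * |s| ≤ 2 * r := by
      have hdist := natCast_mdist p q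
      rw [hx, hy, abs_mul, abs_mul, abs_neg, Nat.abs_cast,
        abs_of_nonneg (by positivity : (0 : ℤ) ≤ r + 1)] at hdist
      linarith [show (mdist p q : ℤ) ≤ 2 * r by exact_mod_cast h]
    exact Int.abs_lt_one_iff.1 (by nlinarith [abs_nonneg s])
  rw [hs, mul_zero, sub_eq_zero] at hx hy
  exact Prod.ext hx hy

/-- Every finite set of cells in which any two cells are at Manhattan distance at most
`2r` has at most `2r² + 2r + 1` cells. -/
theorem card_le_of_pairwise_dist_le_even (r : ℕ) (S : Finset (ℤ × ℤ))
    (h : ∀ p ∈ S, ∀ q ∈ S, mdist p q ≤ 2 * r) :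
    S.card ≤ 2 * r ^ 2 + 2 * r + 1 := by
  have hinj : Set.InjOn (slant r) S := fun p hp q hq => eq_of_slant_eq (h p hp q hq)
  rw [← Finset.card_image_of_injOn hinj]
  apply Int.card_le_of_forall_sub_le
  simp only [Finset.mem_image]
  rintro _ ⟨p, hp, rfl⟩ _ ⟨q, hq, rfl⟩
  push_cast
  exact slant_sub_slant_le (h p hp q hq)
end

section
/- For every natural number r, every finite set S of cells of the integer grid in which any two cells are at Manhattan distance at most 2r+1 satisfies |S| <= 2r^2 + 4r + 2, i.e. |S| <= 2(r+1)^2. -/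
/-!
In the rotated coordinates `u = x + y`, `v = x - y` the Manhattan distance dominates both
`|Δu|` and `|Δv|`, so a set of diameter at most `d` lies in a box `[a, a + d] × [b, b + d]`
of `(u, v)`-values. Since `u ≡ v (mod 2)`, the value of `u` fixes the parity of `v`, leaving
`d + 1` choices for `u` and `⌊d / 2⌋ + 1` for `v`; for `d = 2r + 1` this is `2(r + 1)²`.
-/

lemma natAbs_add_sub_add_le_mdist (p q : ℤ × ℤ) :
    (p.1 + p.2 - (q.1 + q.2)).natAbs ≤ mdist p q := by
  unfold mdist
  omega

lemma natAbs_sub_sub_sub_le_mdist (p q : ℤ × ℤ) :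
    (p.1 - p.2 - (q.1 - q.2)).natAbs ≤ mdist p q := by
  unfold mdist
  omega

lemma exists_forall_mem_Icc_of_natAbs_sub_le {α : Type*} (S : Finset α) (f : α → ℤ) (d : ℕ)
    (h : ∀ p ∈ S, ∀ q ∈ S, (f p - f q).natAbs ≤ d) :
    ∃ a : ℤ, ∀ p ∈ S, f p ∈ Set.Icc a (a + d) := by
  rcases S.eq_empty_or_nonempty with rfl | hne
  · simp
  obtain ⟨q, hq, hmin⟩ := S.exists_min_image f hne
  refine ⟨f q, fun p hp => ⟨hmin p hp, ?_⟩⟩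
  have := h p hp q hq
  omega

lemma card_le_of_forall_add_mem_Icc_of_forall_sub_mem_Icc (S : Finset (ℤ × ℤ)) (a b : ℤ)
    (d : ℕ) (hu : ∀ p ∈ S, p.1 + p.2 ∈ Set.Icc a (a + d))
    (hv : ∀ p ∈ S, p.1 - p.2 ∈ Set.Icc b (b + d)) :
    S.card ≤ (d + 1) * (d / 2 + 1) := by
  let encode (p : ℤ × ℤ) : ℕ × ℕ := ((p.1 + p.2 - a).toNat, (p.1 - p.2 - b).toNat / 2)
  have hmaps : ∀ p ∈ S, encode p ∈ Finset.range (d + 1) ×ˢ Finset.range (d / 2 + 1) := by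
    intro p hp
    obtain ⟨hu₁, hu₂⟩ := hu p hp
    obtain ⟨hv₁, hv₂⟩ := hv p hp
    simp only [encode, Finset.mem_product, Finset.mem_range]
    omega
  have hinj : Set.InjOn encode S := by
    intro p hp q hq hpq
    obtain ⟨hpu, -⟩ := hu p hp
    obtain ⟨hqu, -⟩ := hu q hq
    obtain ⟨hpv, -⟩ := hv p hp
    obtain ⟨hqv, -⟩ := hv q hq
    simp only [encode, Prod.mk.injEq] at hpq
    ext <;> omega
  calc S.card ≤ (Finset.range (d + 1) ×ˢ Finset.range (d / 2 + 1)).card :=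
        Finset.card_le_card_of_injOn encode hmaps hinj
    _ = (d + 1) * (d / 2 + 1) := by simp

lemma card_le_of_forall_mdist_le (S : Finset (ℤ × ℤ)) (d : ℕ)
    (h : ∀ p ∈ S, ∀ q ∈ S, mdist p q ≤ d) :
    S.card ≤ (d + 1) * (d / 2 + 1) := by
  obtain ⟨a, hu⟩ := exists_forall_mem_Icc_of_natAbs_sub_le S (fun p => p.1 + p.2) d
    fun p hp q hq => (natAbs_add_sub_add_le_mdist p q).trans (h p hp q hq)
  obtain ⟨b, hv⟩ := exists_forall_mem_Icc_of_natAbs_sub_le S (fun p => p.1 - p.2) d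
    fun p hp q hq => (natAbs_sub_sub_sub_le_mdist p q).trans (h p hp q hq)
  exact card_le_of_forall_add_mem_Icc_of_forall_sub_mem_Icc S a b d hu hv

/-- Every finite set of cells in which any two cells are at Manhattan distance at most
`2r + 1` has at most `2r² + 4r + 2 = 2(r+1)²` cells. -/
theorem card_le_of_pairwise_dist_le_odd (r : ℕ) (S : Finset (ℤ × ℤ))
    (h : ∀ p ∈ S, ∀ q ∈ S, mdist p q ≤ 2 * r + 1) :
    S.card ≤ 2 * r ^ 2 + 4 * r + 2 ∧ S.card ≤ 2 * (r + 1) ^ 2 := by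
  have hcard := card_le_of_forall_mdist_le S (2 * r + 1) h
  have hcount : (2 * r + 1 + 1) * ((2 * r + 1) / 2 + 1) = 2 * (r + 1) ^ 2 := by
    rw [show (2 * r + 1) / 2 = r by omega]
    ring
  rw [hcount] at hcard
  exact ⟨by linarith, hcard⟩
end

section
/- For every natural number r, the union of the disc of radius r centered at (0,0) and the disc of radius r centered at (1,0) has exactly 2r^2 + 4r + 2 cells and has span exactly 2r+1. -/
/-!
In the diagonal coordinates `u = x + y`, `v = x - y`, the union of the two discs is the set of
pairs `(u, v) ∈ [-r, r + 1]²` of equal parity. Indexing such a pair by `u + r ∈ [0, 2r + 1]` and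
`⌊(v + r) / 2⌋ ∈ [0, r]` shows that there are `(2r + 2)(r + 1)` of them. The span is at most
`r + 1 + r` by the triangle inequality through the centres, and `(-r, 0)`, `(r + 1, 0)` attain it.
-/

open Finset

lemma mem_disc {r : ℕ} {c p : ℤ × ℤ} : p ∈ disc r c ↔ mdist p c ≤ r := by
  rw [disc, mem_filter, and_iff_right_iff_imp, mem_Icc, Prod.le_def, Prod.le_def]
  unfold mdist
  omega

lemma mdist_le_of_mem_disc {r s : ℕ} {c d p q : ℤ × ℤ} (hp : p ∈ disc r c) (hq : q ∈ disc s d) :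
    mdist p q ≤ r + mdist c d + s := by
  rw [mem_disc] at hp hq
  unfold mdist at *
  omega

lemma mem_disc_union_disc {r : ℕ} {p : ℤ × ℤ} :
    p ∈ disc r (0, 0) ∪ disc r (1, 0) ↔
      -(r : ℤ) ≤ p.1 + p.2 ∧ p.1 + p.2 ≤ r + 1 ∧ -(r : ℤ) ≤ p.1 - p.2 ∧ p.1 - p.2 ≤ r + 1 := by
  simp only [mem_union, mem_disc, mdist]
  omega

lemma card_disc_union_disc (r : ℕ) : #(disc r (0, 0) ∪ disc r (1, 0)) = 2 * (r + 1) ^ 2 := by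
  have h : #(disc r (0, 0) ∪ disc r (1, 0)) = #(range (2 * r + 2) ×ˢ range (r + 1)) := by
    refine card_nbij' (fun p => ((p.1 + p.2 + r).toNat, ((p.1 - p.2 + r) / 2).toNat))
      (fun ik => (((ik.1 : ℤ) + 2 * ik.2 + ik.1 % 2) / 2 - r,
        ((ik.1 : ℤ) - 2 * ik.2 - ik.1 % 2) / 2)) ?_ ?_ ?_ ?_
    · intro p hp
      simp only [mem_coe, mem_disc_union_disc, mem_product, mem_range] at hp ⊢
      omega
    · intro ik hik
      simp only [mem_coe, mem_disc_union_disc, mem_product, mem_range] at hik ⊢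
      omega
    · intro p hp
      simp only [mem_coe, mem_disc_union_disc] at hp
      ext <;> dsimp only <;> omega
    · intro ik hik
      simp only [mem_coe, mem_product, mem_range] at hik
      ext <;> dsimp only <;> omega
  rw [h, card_product, card_range, card_range]
  ring

/-- The union of the discs of radius `r` centered at `(0,0)` and at `(1,0)` has exactly
`2r² + 4r + 2` cells and span exactly `2r + 1`. -/
theorem disc_union_card_span (r : ℕ) :
    (disc r (0, 0) ∪ disc r (1, 0)).card = 2 * r ^ 2 + 4 * r + 2 ∧
    (∀ p ∈ disc r (0, 0) ∪ disc r (1, 0), ∀ q ∈ disc r (0, 0) ∪ disc r (1, 0),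
      mdist p q ≤ 2 * r + 1) ∧
    (∃ p ∈ disc r (0, 0) ∪ disc r (1, 0), ∃ q ∈ disc r (0, 0) ∪ disc r (1, 0),
      mdist p q = 2 * r + 1) := by
  refine ⟨by rw [card_disc_union_disc]; ring, ?_, ?_⟩
  · intro p hp q hq
    rcases mem_union.1 hp with hp | hp <;> rcases mem_union.1 hq with hq | hq <;>
      exact (mdist_le_of_mem_disc hp hq).trans (by simp only [mdist]; omega)
  · refine ⟨(-r, 0), mem_union_left _ ?_, (r + 1, 0), mem_union_right _ ?_, ?_⟩
    all_goals simp only [mem_disc, mdist]; omega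
end

section
/- Every nonempty finite set S of cells of the integer grid whose span equals s satisfies 2|S| <= (s+1)^2 + 1. -/
/-!
The rotation `(x, y) ↦ (x + y, x - y)` turns Manhattan distance into Chebyshev distance, so a set
of span `s` becomes, after a translation, a subset of the square `[0, s]²` lying in one colour class
of the checkerboard (both new coordinates have the parity of `x + y`). A colour class of that square
has at most `⌈(s + 1)² / 2⌉` cells: for odd `s` the reflection `j ↦ s - j` swaps the two colours,
and for even `s` the numbers `i (s + 1) + j` attached to the cells of one colour are distinct, of one
parity, and lie in `[0, (s + 1)² - 1]`.
-/

open Finset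

def rotate (p : ℤ × ℤ) : ℤ × ℤ := (p.1 + p.2, p.1 - p.2)

lemma rotate_injective : Function.Injective rotate := by
  intro p q h
  simp only [rotate, Prod.ext_iff] at h
  ext <;> omega

lemma mdist_eq_max_rotate (p q : ℤ × ℤ) :
    mdist p q = max ((rotate p).1 - (rotate q).1).natAbs ((rotate p).2 - (rotate q).2).natAbs := by
  simp only [mdist, rotate]
  omega

lemma mdist_le_span {S : Finset (ℤ × ℤ)} {p q : ℤ × ℤ} (hp : p ∈ S) (hq : q ∈ S) :
    mdist p q ≤ span S :=
  le_sup (f := fun pq : (ℤ × ℤ) × (ℤ × ℤ) => mdist pq.1 pq.2) (b := (p, q)) (mem_product.2 ⟨hp, hq⟩)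

lemma two_mul_card_le_of_subset_Icc_of_emod_eq {K : Finset ℤ} {m : ℕ} {c : ℤ}
    (hK : K ⊆ Icc 0 (m : ℤ)) (hc : ∀ x ∈ K, x % 2 = c) : 2 * #K ≤ m + 2 := by
  have hmaps : Set.MapsTo (· / 2) (K : Set ℤ) (Icc 0 ((m : ℤ) / 2)) := fun x hx => by
    have := mem_Icc.1 (hK hx)
    simp only [coe_Icc, Set.mem_Icc]
    omega
  have hinj : Set.InjOn (· / 2) (K : Set ℤ) := fun x hx y hy hxy => by
    have := hc x hx
    have := hc y hy
    simp only at hxy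
    omega
  have := card_le_card_of_injOn _ hmaps hinj
  rw [Int.card_Icc] at this
  omega

noncomputable def square (s : ℕ) : Finset (ℤ × ℤ) := Icc 0 (s : ℤ) ×ˢ Icc 0 (s : ℤ)

lemma mem_square {s : ℕ} {p : ℤ × ℤ} :
    p ∈ square s ↔ 0 ≤ p.1 ∧ p.1 ≤ s ∧ 0 ≤ p.2 ∧ p.2 ≤ s := by
  simp only [square, mem_product, mem_Icc, and_assoc]

lemma card_square (s : ℕ) : #(square s) = (s + 1) ^ 2 := by
  rw [square, card_product, Int.card_Icc]
  simp only [sub_zero, Int.toNat_natCast_add_one, sq]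

section Checkerboard

variable {s : ℕ} {T : Finset (ℤ × ℤ)} {c : ℤ}

lemma two_mul_card_le_of_subset_square_of_odd (hs : Odd s) (hT : T ⊆ square s)
    (hc : ∀ p ∈ T, (p.1 + p.2) % 2 = c) : 2 * #T ≤ (s + 1) ^ 2 := by
  set reflect : ℤ × ℤ → ℤ × ℤ := fun p => (p.1, s - p.2)
  have hreflect : Function.Injective reflect := fun p q h => by
    simp only [reflect, Prod.ext_iff] at h
    ext <;> omega
  obtain ⟨t, rfl⟩ := hs
  have hdisj : Disjoint T (T.image reflect) := by
    rw [disjoint_left]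
    intro _ hp hp'
    obtain ⟨q, hq, rfl⟩ := mem_image.1 hp'
    have := hc _ hp
    have := hc q hq
    push_cast [reflect] at *
    omega
  have hsub : T ∪ T.image reflect ⊆ square (2 * t + 1) := by
    refine union_subset hT fun p hp => ?_
    obtain ⟨q, hq, rfl⟩ := mem_image.1 hp
    have := mem_square.1 (hT hq)
    simp only [mem_square, reflect]
    omega
  calc 2 * #T = #(T ∪ T.image reflect) := by
        rw [card_union_of_disjoint hdisj, card_image_of_injective _ hreflect]; ring
    _ ≤ #(square (2 * t + 1)) := card_le_card hsub
    _ = (2 * t + 1 + 1) ^ 2 := card_square _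

lemma two_mul_card_le_of_subset_square_of_even (hs : Even s) (hT : T ⊆ square s)
    (hc : ∀ p ∈ T, (p.1 + p.2) % 2 = c) : 2 * #T ≤ (s + 1) ^ 2 + 1 := by
  set key : ℤ × ℤ → ℤ := fun p => p.1 * (s + 1) + p.2
  have hinj : Set.InjOn key T := fun p hp q hq h => by
    obtain ⟨-, -, hp₂, hp₂'⟩ := mem_square.1 (hT hp)
    obtain ⟨-, -, hq₂, hq₂'⟩ := mem_square.1 (hT hq)
    have h₁ : p.1 = q.1 := by
      rcases lt_trichotomy p.1 q.1 with hlt | heq | hgt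
      · nlinarith
      · exact heq
      · nlinarith
    ext
    · exact h₁
    · simpa only [key, h₁, add_right_inj] using h
  have hsub : T.image key ⊆ Icc 0 ((s * (s + 1) + s : ℕ) : ℤ) := fun k hk => by
    obtain ⟨p, hp, rfl⟩ := mem_image.1 hk
    obtain ⟨hp₁, hp₁', hp₂, hp₂'⟩ := mem_square.1 (hT hp)
    push_cast
    exact mem_Icc.2 ⟨by positivity, by nlinarith⟩
  -- `key p ≡ p.1 + p.2 (mod 2)` because `s + 1` is odd.
  have hkey : ∀ k ∈ T.image key, k % 2 = c := fun k hk => by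
    obtain ⟨p, hp, rfl⟩ := mem_image.1 hk
    obtain ⟨t, rfl⟩ := hs
    have : key p = p.1 + p.2 + 2 * (p.1 * t) := by push_cast [key]; ring
    rw [this, Int.add_mul_emod_self_left, hc p hp]
  have := two_mul_card_le_of_subset_Icc_of_emod_eq hsub hkey
  rw [card_image_of_injOn hinj] at this
  linarith

lemma two_mul_card_le_of_subset_square (hT : T ⊆ square s) (hc : ∀ p ∈ T, (p.1 + p.2) % 2 = c) :
    2 * #T ≤ (s + 1) ^ 2 + 1 := by
  rcases s.even_or_odd with hs | hs
  · exact two_mul_card_le_of_subset_square_of_even hs hT hc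
  · exact (two_mul_card_le_of_subset_square_of_odd hs hT hc).trans (Nat.le_succ _)

lemma two_mul_card_le_of_natAbs_sub_le
    (hT : ∀ p ∈ T, ∀ q ∈ T, (p.1 - q.1).natAbs ≤ s ∧ (p.2 - q.2).natAbs ≤ s)
    (hc : ∀ p ∈ T, (p.1 + p.2) % 2 = c) : 2 * #T ≤ (s + 1) ^ 2 + 1 := by
  rcases T.eq_empty_or_nonempty with rfl | hne
  · simp
  obtain ⟨p₀, hp₀, hmin₁⟩ := T.exists_min_image Prod.fst hne
  obtain ⟨q₀, hq₀, hmin₂⟩ := T.exists_min_image Prod.snd hne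
  have hsub : T.image (· - (p₀.1, q₀.2)) ⊆ square s := fun p' hp' => by
    obtain ⟨p, hp, rfl⟩ := mem_image.1 hp'
    have := hmin₁ p hp
    have := hmin₂ p hp
    have := (hT p hp p₀ hp₀).1
    have := (hT p hp q₀ hq₀).2
    simp only [mem_square, Prod.fst_sub, Prod.snd_sub]
    omega
  have hc' : ∀ p ∈ T.image (· - (p₀.1, q₀.2)), (p.1 + p.2) % 2 = (c - p₀.1 - q₀.2) % 2 := by
    simp only [forall_mem_image, Prod.fst_sub, Prod.snd_sub]
    intro p hp
    have := hc p hp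
    omega
  simpa only [card_image_of_injective _ sub_left_injective] using
    two_mul_card_le_of_subset_square hsub hc'

end Checkerboard

theorem two_card_le_of_span_general (s : ℕ) (S : Finset (ℤ × ℤ)) (hs : span S = s) :
    2 * S.card ≤ (s + 1) ^ 2 + 1 := by
  rw [← card_image_of_injective S rotate_injective]
  refine two_mul_card_le_of_natAbs_sub_le (c := 0) ?_ ?_
  · simp only [forall_mem_image]
    intro p hp q hq
    have := hs ▸ mdist_eq_max_rotate p q ▸ mdist_le_span hp hq
    omega
  · simp only [forall_mem_image, rotate]
    intro p _
    omega

/-- Every nonempty finite set `S` of cells whose span equals `s` satisfies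
`2|S| ≤ (s+1)² + 1`. -/
theorem two_card_le_of_span (s : ℕ) (S : Finset (ℤ × ℤ)) (hne : S.Nonempty)
    (hs : span S = s) :
    2 * S.card ≤ (s + 1) ^ 2 + 1 :=
  two_card_le_of_span_general s S hs
end

section
/- For every natural number r, the disc of radius r centered at any cell is a nest: every finite set of cells of the integer grid of cardinality 2r^2 + 2r + 1 has span at least 2r, and the disc of radius r has cardinality 2r^2 + 2r + 1 and span exactly 2r. -/
/-!
In the rotated coordinates `u = x + y`, `v = x - y` the Manhattan distance becomes the
Chebyshev distance, and the cells are exactly the pairs `(u, v)` with `u ≡ v [ZMOD 2]`.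
A set of span less than `2r` therefore lies in a `2r × 2r` square of `(u, v)`-values, which
contains only `2r²` pairs of the right parity. The disc of radius `r` is the square
`|u|, |v| ≤ r`; split by the parity of `u + r`, it is the union of two interleaved
squares with `(r + 1)²` and `r²` cells.
-/

open Finset

lemma span_le_iff {S : Finset (ℤ × ℤ)} {d : ℕ} :
    span S ≤ d ↔ ∀ p ∈ S, ∀ q ∈ S, mdist p q ≤ d := by
  simp only [span, sup_product_left, Finset.sup_le_iff]

lemma card_le_of_add_sub_bounded {S : Finset (ℤ × ℤ)} {a b : ℤ} {m n : ℕ}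
    (hu : ∀ p ∈ S, a ≤ p.1 + p.2 ∧ p.1 + p.2 < a + m)
    (hv : ∀ p ∈ S, b ≤ p.1 - p.2 ∧ p.1 - p.2 < b + 2 * n) :
    S.card ≤ m * n := by
  have hmaps : ∀ p ∈ S, (p.1 + p.2 - a, (p.1 - p.2 - b) / 2) ∈ Ico (0 : ℤ) m ×ˢ Ico (0 : ℤ) n := by
    intro p hp
    have := hu p hp
    have := hv p hp
    simp only [mem_product, mem_Ico]
    omega
  -- `u` fixes the parity of `v`, so halving `v` loses nothing.
  have hinj : Set.InjOn (fun p : ℤ × ℤ => (p.1 + p.2 - a, (p.1 - p.2 - b) / 2)) S := by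
    intro p _ q _ h
    simp only [Prod.ext_iff] at h ⊢
    omega
  simpa using card_le_card_of_injOn _ hmaps hinj

lemma card_le_of_span_lt {S : Finset (ℤ × ℤ)} {r : ℕ} (hS : span S < 2 * r) :
    S.card ≤ 2 * r ^ 2 := by
  rcases S.eq_empty_or_nonempty with rfl | hne
  · simp
  obtain ⟨pu, hpu, hu⟩ := S.exists_min_image (fun p => p.1 + p.2) hne
  obtain ⟨pv, hpv, hv⟩ := S.exists_min_image (fun p => p.1 - p.2) hne
  refine (card_le_of_add_sub_bounded (m := 2 * r) (n := r) (a := pu.1 + pu.2)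
    (b := pv.1 - pv.2) (fun p hp => ?_) (fun p hp => ?_)).trans_eq (by ring)
  all_goals
    have := hu p hp
    have := hv p hp
    have := mdist_le_span hp hpu
    have := mdist_le_span hp hpv
    simp only [mdist] at *
    omega

-- Relative to `c`, the cell `rotatedGrid c t (i, j)` has `(u, v) = (2i + t, -2j - t)`.
def rotatedGrid (c : ℤ × ℤ) (t : ℤ) (ij : ℕ × ℕ) : ℤ × ℤ :=
  (c.1 + ij.1 - ij.2, c.2 + ij.1 + ij.2 + t)

lemma rotatedGrid_injective (c : ℤ × ℤ) (t : ℤ) : Function.Injective (rotatedGrid c t) := by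
  intro ⟨i, j⟩ ⟨i', j'⟩ h
  simp only [rotatedGrid, Prod.ext_iff] at h ⊢
  omega

lemma disc_eq_union (r : ℕ) (c : ℤ × ℤ) :
    disc r c = (range (r + 1) ×ˢ range (r + 1)).image (rotatedGrid c (-r)) ∪
      (range r ×ˢ range r).image (rotatedGrid c (1 - r)) := by
  ext ⟨x, y⟩
  simp only [mem_disc, mdist, rotatedGrid, mem_union, mem_image, mem_product, mem_range,
    Prod.exists, Prod.ext_iff]
  constructor
  · intro h
    by_cases heven : (x - c.1 + (y - c.2) + r) % 2 = 0
    · left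
      exact ⟨((x - c.1 + (y - c.2) + r) / 2).toNat, ((r - (x - c.1) + (y - c.2)) / 2).toNat,
        by omega⟩
    · right
      exact ⟨((x - c.1 + (y - c.2) + r - 1) / 2).toNat,
        ((r - 1 - (x - c.1) + (y - c.2)) / 2).toNat, by omega⟩
  · rintro (⟨i, j, _, _, _⟩ | ⟨i, j, _, _, _⟩) <;> omega

lemma disjoint_image_rotatedGrid (r : ℕ) (c : ℤ × ℤ) :
    Disjoint ((range (r + 1) ×ˢ range (r + 1)).image (rotatedGrid c (-r)))
      ((range r ×ˢ range r).image (rotatedGrid c (1 - r))) := by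
  simp only [disjoint_left, rotatedGrid, mem_image, Prod.exists, Prod.ext_iff, not_exists,
    not_and]
  omega

lemma card_disc (r : ℕ) (c : ℤ × ℤ) : (disc r c).card = 2 * r ^ 2 + 2 * r + 1 := by
  rw [disc_eq_union, card_union_of_disjoint (disjoint_image_rotatedGrid r c),
    card_image_of_injective _ (rotatedGrid_injective c _),
    card_image_of_injective _ (rotatedGrid_injective c _),
    card_product, card_product, card_range, card_range]
  ring

lemma span_disc (r : ℕ) (c : ℤ × ℤ) : span (disc r c) = 2 * r := by
  refine le_antisymm (span_le_iff.2 fun p hp q hq => ?_) ?_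
  · have := mem_disc.1 hp
    have := mem_disc.1 hq
    simp only [mdist] at *
    omega
  · have hright : (c.1 + r, c.2) ∈ disc r c := mem_disc.2 (by simp [mdist])
    have hleft : (c.1 - r, c.2) ∈ disc r c := mem_disc.2 (by simp [mdist])
    have := mdist_le_span hright hleft
    simp only [mdist] at this
    omega

/-- The disc of radius `r` is a nest: every finite set of `2r² + 2r + 1` cells has span
at least `2r`, and the disc has exactly `2r² + 2r + 1` cells and span exactly `2r`. -/
theorem disc_is_nest (r : ℕ) (c : ℤ × ℤ) :
    (∀ S : Finset (ℤ × ℤ), S.card = 2 * r ^ 2 + 2 * r + 1 → 2 * r ≤ span S) ∧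
    (disc r c).card = 2 * r ^ 2 + 2 * r + 1 ∧
    span (disc r c) = 2 * r := by
  refine ⟨fun S hS => ?_, card_disc r c, span_disc r c⟩
  by_contra! hlt
  have := card_le_of_span_lt hlt
  omega
end

section
/- For every positive integer z, the minimum possible span of a set of z cells of the integer grid equals ceil(sqrt(2z-1)) - 1; equivalently, it equals the least natural number s such that (s+1)^2 >= 2z - 1. -/
/-!
The rotation `(x, y) ↦ (x + y, x - y)` turns the Manhattan distance into the Chebyshev distance
and maps the grid onto the cells with `x + y` even. A set of span `s` therefore becomes a set of
cells of one colour of a checkerboard inside an `(s + 1) × (s + 1)` square, of which there are at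
most `⌈(s + 1)² / 2⌉`. Conversely, rotating back the cells of the majority colour of an `n × n`
square gives `⌈n² / 2⌉` cells of span at most `n - 1`.
-/

open Finset

lemma span_mono {S T : Finset (ℤ × ℤ)} (h : S ⊆ T) : span S ≤ span T :=
  sup_mono (product_subset_product h h)

lemma card_filter_range_mod_two_eq_zero (n : ℕ) : #{i ∈ range n | i % 2 = 0} = (n + 1) / 2 := by
  induction n with
  | zero => rfl
  | succ n ih =>
    rw [range_add_one, filter_insert]
    split_ifs <;> simp [card_insert_of_notMem, ih] <;> omega

lemma card_filter_range_mod_two_eq_one (n : ℕ) : #{i ∈ range n | i % 2 = 1} = n / 2 := by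
  induction n with
  | zero => rfl
  | succ n ih =>
    rw [range_add_one, filter_insert]
    split_ifs <;> simp [card_insert_of_notMem, ih] <;> omega

def checkerboard (n c : ℕ) : Finset (ℕ × ℕ) :=
  {q ∈ range n ×ˢ range n | (q.1 + q.2) % 2 = c}

lemma card_checkerboard (n : ℕ) {c : ℕ} (hc : c < 2) :
    #(checkerboard n c) =
      (n + 1) / 2 * #{j ∈ range n | j % 2 = c} + n / 2 * #{j ∈ range n | j % 2 = 1 - c} := by
  have hsplit : checkerboard n c =
      {i ∈ range n | i % 2 = 0} ×ˢ {j ∈ range n | j % 2 = c} ∪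
        {i ∈ range n | i % 2 = 1} ×ˢ {j ∈ range n | j % 2 = 1 - c} := by
    ext ⟨i, j⟩
    simp only [checkerboard, mem_filter, mem_product, mem_union, mem_range]
    omega
  have hdisj : Disjoint
      ({i ∈ range n | i % 2 = 0} ×ˢ {j ∈ range n | j % 2 = c})
      ({i ∈ range n | i % 2 = 1} ×ˢ {j ∈ range n | j % 2 = 1 - c}) := by
    rw [disjoint_left]
    rintro ⟨i, j⟩ h₀ h₁
    simp only [mem_filter, mem_product] at h₀ h₁
    omega
  rw [hsplit, card_union_of_disjoint hdisj, card_product, card_product,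
    card_filter_range_mod_two_eq_zero, card_filter_range_mod_two_eq_one]

lemma two_mul_card_checkerboard_le (n c : ℕ) : 2 * #(checkerboard n c) ≤ n ^ 2 + 1 := by
  rcases lt_or_ge c 2 with hc | hc
  · rw [card_checkerboard n hc]
    obtain ⟨k, rfl | rfl⟩ := Nat.even_or_odd' n <;> interval_cases c <;>
      simp only [Nat.sub_zero, Nat.sub_self, card_filter_range_mod_two_eq_zero,
        card_filter_range_mod_two_eq_one, show (2 * k + 1) / 2 = k by omega,
        show 2 * k / 2 = k by omega, show (2 * k + 1 + 1) / 2 = k + 1 by omega] <;>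
      ring_nf <;> omega
  · have : checkerboard n c = ∅ := filter_false_of_mem fun q _ => by omega
    simp [this]

lemma sq_le_two_mul_card_checkerboard_zero (n : ℕ) : n ^ 2 ≤ 2 * #(checkerboard n 0) := by
  rw [card_checkerboard n two_pos, card_filter_range_mod_two_eq_zero, Nat.sub_zero,
    card_filter_range_mod_two_eq_one]
  obtain ⟨k, rfl | rfl⟩ := Nat.even_or_odd' n
  · rw [show (2 * k + 1) / 2 = k by omega, show 2 * k / 2 = k by omega]
    ring_nf
    omega
  · rw [show (2 * k + 1 + 1) / 2 = k + 1 by omega, show (2 * k + 1) / 2 = k by omega]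
    ring_nf
    omega

lemma exists_card_le_card_checkerboard {S : Finset (ℤ × ℤ)} (hS : S.Nonempty) :
    ∃ c, #S ≤ #(checkerboard (span S + 1) c) := by
  obtain ⟨u, hu, hu_min⟩ := S.exists_min_image (fun p => p.1 + p.2) hS
  obtain ⟨v, hv, hv_min⟩ := S.exists_min_image (fun p => p.1 - p.2) hS
  let rotate (p : ℤ × ℤ) : ℕ × ℕ :=
    ((p.1 + p.2 - (u.1 + u.2)).toNat, (p.1 - p.2 - (v.1 - v.2)).toNat)
  refine ⟨((u.1 + u.2 + v.1 - v.2) % 2).toNat, card_le_card_of_injOn rotate ?_ ?_⟩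
  · intro p hp
    have hpu := mdist_le_span hp hu
    have hpv := mdist_le_span hp hv
    have := hu_min p hp
    have := hv_min p hp
    simp only [mdist] at hpu hpv
    simp only [checkerboard, mem_coe, mem_filter, mem_product, mem_range, rotate]
    omega
  · intro p hp q hq h
    have := hu_min p hp
    have := hv_min p hp
    have := hu_min q hq
    have := hv_min q hq
    simp only [rotate, Prod.mk.injEq] at h
    ext <;> omega

lemma two_mul_card_le_span_add_one_sq (S : Finset (ℤ × ℤ)) :
    2 * #S ≤ (span S + 1) ^ 2 + 1 := by
  rcases S.eq_empty_or_nonempty with rfl | hS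
  · simp
  obtain ⟨c, hc⟩ := exists_card_le_card_checkerboard hS
  have := two_mul_card_checkerboard_le (span S + 1) c
  omega

lemma exists_card_eq_span_le {z s : ℕ} (h : 2 * z ≤ (s + 1) ^ 2 + 1) :
    ∃ S : Finset (ℤ × ℤ), #S = z ∧ span S ≤ s := by
  let unrotate (q : ℕ × ℕ) : ℤ × ℤ := (((q.1 : ℤ) + q.2) / 2, ((q.1 : ℤ) - q.2) / 2)
  let B := checkerboard (s + 1) 0
  have hinj : Set.InjOn unrotate B := by
    rintro ⟨i, j⟩ hij ⟨i', j'⟩ hij' h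
    simp only [B, checkerboard, mem_coe, mem_filter, mem_product, mem_range] at hij hij'
    simp only [unrotate, Prod.mk.injEq] at h ⊢
    omega
  have hspan : span (B.image unrotate) ≤ s := by
    apply Finset.sup_le
    rintro ⟨p, q⟩ hpq
    simp only [mem_product, mem_image] at hpq
    obtain ⟨⟨⟨i, j⟩, hij, rfl⟩, ⟨⟨i', j'⟩, hij', rfl⟩⟩ := hpq
    simp only [B, checkerboard, mem_filter, mem_product, mem_range] at hij hij'
    simp only [mdist, unrotate]
    omega
  have hz : z ≤ #(B.image unrotate) := by
    have : (s + 1) ^ 2 ≤ 2 * #B := sq_le_two_mul_card_checkerboard_zero (s + 1)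
    rw [card_image_of_injOn hinj]
    omega
  obtain ⟨S, hSB, rfl⟩ := exists_subset_card_eq hz
  exact ⟨S, rfl, (span_mono hSB).trans hspan⟩

lemma natCeil_sqrt_le_iff (x k : ℕ) : ⌈√(x : ℝ)⌉₊ ≤ k ↔ x ≤ k ^ 2 := by
  rw [Nat.ceil_le, Real.sqrt_le_left (Nat.cast_nonneg k)]
  exact_mod_cast Iff.rfl

-- At `z = 0` both sides are `0`, the left one because `√` vanishes on negative reals.
lemma sqrt_two_mul_sub_one_eq_sqrt_natCast (z : ℕ) : √(2 * z - 1 : ℝ) = √((2 * z - 1 : ℕ) : ℝ) := by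
  rcases z.eq_zero_or_pos with rfl | hz
  · simp [Real.sqrt_eq_zero']
  · rw [Nat.cast_sub (by omega)]
    push_cast
    rfl

theorem min_span_of_card_general (z : ℕ) :
    IsLeast {s : ℕ | ∃ S : Finset (ℤ × ℤ), S.card = z ∧ span S = s}
      (⌈Real.sqrt (2 * z - 1)⌉₊ - 1) ∧
    ⌈Real.sqrt (2 * z - 1)⌉₊ - 1 = sInf {s : ℕ | 2 * z - 1 ≤ (s + 1) ^ 2} := by
  have hm : ∀ k, ⌈√(2 * z - 1 : ℝ)⌉₊ - 1 ≤ k ↔ 2 * z - 1 ≤ (k + 1) ^ 2 := fun k => by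
    rw [tsub_le_iff_right, sqrt_two_mul_sub_one_eq_sqrt_natCast, natCeil_sqrt_le_iff]
  set m := ⌈√(2 * z - 1 : ℝ)⌉₊
  have hleast : IsLeast {s : ℕ | 2 * z - 1 ≤ (s + 1) ^ 2} (m - 1) :=
    ⟨(hm _).1 le_rfl, fun k hk => (hm k).2 hk⟩
  have hspan_ge (S : Finset (ℤ × ℤ)) (hS : #S = z) : m - 1 ≤ span S := by
    have := two_mul_card_le_span_add_one_sq S
    exact (hm _).2 (by omega)
  refine ⟨⟨?_, ?_⟩, hleast.csInf_eq.symm⟩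
  · have hm_mem : 2 * z - 1 ≤ (m - 1 + 1) ^ 2 := hleast.1
    obtain ⟨S, hS, hspan⟩ := exists_card_eq_span_le (z := z) (s := m - 1) (by omega)
    exact ⟨S, hS, le_antisymm hspan (hspan_ge S hS)⟩
  · rintro _ ⟨S, hS, rfl⟩
    exact hspan_ge S hS

/-- For every positive `z`, the minimum possible span of a set of `z` cells equals
`⌈√(2z-1)⌉ - 1`, which is the least natural number `s` with `(s+1)² ≥ 2z - 1`. -/
theorem min_span_of_card (z : ℕ) (hz : 0 < z) :
    IsLeast {s : ℕ | ∃ S : Finset (ℤ × ℤ), S.card = z ∧ span S = s}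
      (⌈Real.sqrt (2 * z - 1)⌉₊ - 1) ∧
    ⌈Real.sqrt (2 * z - 1)⌉₊ - 1 = sInf {s : ℕ | 2 * z - 1 ≤ (s + 1) ^ 2} :=
  min_span_of_card_general z
end

section
/- Let A and B be disjoint finite sets of cells of the integer grid such that every cell of A is at Manhattan distance at least D from every cell of B, where D is a natural number. Let N be a set of cells whose span is at most D', with D' <= D, and let f be a function mapping every cell of A union B to a cell of N. Then the sum over all x in A union B of the Manhattan distance between x and f(x) is at least min(|A|,|B|) * (D - D'). -/
/-!
If `a ∈ A` and `b ∈ B` are sent into `N`, the triangle inequality through `f a` and `f b`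
gives `D ≤ mdist a b ≤ mdist a (f a) + D' + mdist b (f b)`. So the costs `c x = mdist x (f x)`
satisfy `c a + c b ≥ D - D'` for every pair; taking the cheapest `a₀ ∈ A` and `b₀ ∈ B`, the
total cost is at least `|A| c a₀ + |B| c b₀ ≥ min(|A|,|B|) (c a₀ + c b₀)`.
-/

open Finset

lemma mdist_comm (p q : ℤ × ℤ) : mdist p q = mdist q p := by
  unfold mdist; omega

lemma mdist_triangle (p q r : ℤ × ℤ) : mdist p r ≤ mdist p q + mdist q r := by
  unfold mdist; omega

lemma sub_le_mdist_add_mdist {p q p' q' : ℤ × ℤ} {D D' : ℕ}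
    (hpq : D ≤ mdist p q) (hpq' : mdist p' q' ≤ D') :
    D - D' ≤ mdist p p' + mdist q q' := by
  have := mdist_triangle p p' q
  have := mdist_triangle p' q' q
  have := mdist_comm q' q
  omega

lemma min_card_mul_le_sum_add_sum {α β : Type*} (s : Finset α) (t : Finset β)
    (g : α → ℕ) (h : β → ℕ) (K : ℕ) (hK : ∀ a ∈ s, ∀ b ∈ t, K ≤ g a + h b) :
    min #s #t * K ≤ ∑ a ∈ s, g a + ∑ b ∈ t, h b := by
  rcases s.eq_empty_or_nonempty with rfl | hs
  · simp
  rcases t.eq_empty_or_nonempty with rfl | ht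
  · simp
  obtain ⟨a₀, ha₀, ha₀_min⟩ := s.exists_min_image g hs
  obtain ⟨b₀, hb₀, hb₀_min⟩ := t.exists_min_image h ht
  calc min #s #t * K ≤ min #s #t * (g a₀ + h b₀) := Nat.mul_le_mul_left _ (hK a₀ ha₀ b₀ hb₀)
    _ ≤ #s * g a₀ + #t * h b₀ := by
        rw [mul_add]
        gcongr
        exacts [min_le_left _ _, min_le_right _ _]
    _ ≤ ∑ a ∈ s, g a + ∑ b ∈ t, h b := by
        gcongr
        · simpa using s.card_nsmul_le_sum g _ ha₀_min
        · simpa using t.card_nsmul_le_sum h _ hb₀_min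

theorem transport_lower_bound_general (A B N : Finset (ℤ × ℤ)) (hAB : Disjoint A B)
    (D D' : ℕ)
    (hfar : ∀ a ∈ A, ∀ b ∈ B, D ≤ mdist a b)
    (hN : span N ≤ D')
    (f : ℤ × ℤ → ℤ × ℤ) (hf : ∀ x ∈ A ∪ B, f x ∈ N) :
    min A.card B.card * (D - D') ≤ ∑ x ∈ A ∪ B, mdist x (f x) := by
  rw [sum_union hAB]
  refine min_card_mul_le_sum_add_sum A B _ _ _ fun a ha b hb => ?_
  have hfab : mdist (f a) (f b) ≤ D' :=
    (mdist_le_span (hf a (mem_union_left _ ha)) (hf b (mem_union_right _ hb))).trans hN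
  exact sub_le_mdist_add_mdist (hfar a ha b hb) hfab

/-- If the disjoint finite sets `A` and `B` are at Manhattan distance at least `D`
from each other and `f` maps `A ∪ B` into a set `N` of span at most `D' ≤ D`, then the
total distance travelled, `∑ x ∈ A ∪ B, mdist x (f x)`, is at least
`min(|A|,|B|) ⬝ (D - D')`. -/
theorem transport_lower_bound (A B N : Finset (ℤ × ℤ)) (hAB : Disjoint A B)
    (D D' : ℕ) (hD : D' ≤ D)
    (hfar : ∀ a ∈ A, ∀ b ∈ B, D ≤ mdist a b)
    (hN : span N ≤ D')
    (f : ℤ × ℤ → ℤ × ℤ) (hf : ∀ x ∈ A ∪ B, f x ∈ N) :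
    min A.card B.card * (D - D') ≤ ∑ x ∈ A ∪ B, mdist x (f x) :=
  transport_lower_bound_general A B N hAB D D' hfar hN f hf
end
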